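/- arXiv:math/0608674 — 4 statements merged into one kernel-verified Lean document; each statement's English description precedes it below -/
import Mathlib

section
/- For the functions f(x,y) = (1-axy)(1-bx/y) and g(x,y) = (x-y)(1-b/(axy)), the identity f(x,a')g(b',c') + f(x,b')g(c',a') + f(x,c')g(a',b') = 0 holds for all nonzero complex numbers a', b', c', x and parameters a ≠ 0, b, i.e. (1-axa')(1-bx/a')·(b'-c')(1-b/(ab'c')) + (1-axb')(1-bx/b')·(c'-a')(1-b/(ac'a')) + (1-axc')(1-bx/c')·(a'-b')(1-b/(aa'b')) = 0. -/
theorem fg_identity_wellpoised (a b : ℂ) (ha : a ≠ 0) (a' b' c' x : ℂ)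
    (ha' : a' ≠ 0) (hb' : b' ≠ 0) (hc' : c' ≠ 0) (hx : x ≠ 0) :
    (1 - a * x * a') * (1 - b * x / a') * ((b' - c') * (1 - b / (a * b' * c'))) +
    (1 - a * x * b') * (1 - b * x / b') * ((c' - a') * (1 - b / (a * c' * a'))) +
    (1 - a * x * c') * (1 - b * x / c') * ((a' - b') * (1 - b / (a * a' * b'))) = 0 := by
  have h1 : a * b' * c' ≠ 0 := by simp [ha, hb', hc']
  have h2 : a * c' * a' ≠ 0 := by simp [ha, hc', ha']
  have h3 : a * a' * b' ≠ 0 := by simp [ha, ha', hb']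
  rw [one_sub_div h1, one_sub_div h2, one_sub_div h3, one_sub_div ha', one_sub_div hb',
    one_sub_div hc']
  field_simp
  ring
end

section
/- For n ≥ 1 and F : ℂ → ℂ, the (1, x-y)-difference over the geometric nodes equals (up to constant) the n-th q-difference: Σ_{k=0}^{n} F(xq^k) / ∏_{i=0,i≠k}^{n} (xq^i - xq^k) = ((-1)^n / (q;q)_n) · D_{q,x}^n F(x), where D_{q,x}F(x) = (F(x)-F(qx))/x. -/
noncomputable def qpoch (a q : ℂ) (n : ℕ) : ℂ := ∏ i ∈ Finset.range n, (1 - a * q ^ i)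

noncomputable def qdiff (q : ℂ) (F : ℂ → ℂ) : ℂ → ℂ := fun x => (F x - F (q * x)) / x

/-!
Up to the sign `(-1)^n`, the left-hand side is the divided difference `F[x, qx, …, qⁿx]`.
Divided differences are the top coefficients of Lagrange interpolants, hence satisfy
`F[x₀, …, xₙ₊₁] = (F[x₁, …, xₙ₊₁] - F[x₀, …, xₙ]) / (xₙ₊₁ - x₀)`. For geometric nodes the two
shorter differences live on the nodes starting at `qx` and at `x`, so one step of the recursion
is one application of `D_q`, and induction gives `F[x, …, qⁿx] = D_qⁿ F(x) / (q;q)ₙ`.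
-/

open Finset Polynomial Lagrange

section DividedDifference

variable {K ι κ : Type*} [Field K] [DecidableEq ι]

noncomputable def divDiff (f : K → K) (s : Finset ι) (v : ι → K) : K :=
  ∑ i ∈ s, f (v i) / ∏ j ∈ s.erase i, (v i - v j)

theorem divDiff_eq_coeff_interpolate (f : K → K) {s : Finset ι} {v : ι → K}
    (hvs : Set.InjOn v s) : divDiff f s v = (interpolate s v (f ∘ v)).coeff (#s - 1) := by
  rw [coeff_eq_sum hvs (degree_interpolate_lt _ hvs), divDiff]
  refine sum_congr rfl fun i hi => ?_
  rw [eval_interpolate_at_node _ hvs hi, Function.comp_apply]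

theorem coeff_mul_basisDivisor {p : K[X]} {m : ℕ} (hp : p.degree < ↑(m + 1)) (x y : K) :
    (p * basisDivisor x y).coeff (m + 1) = p.coeff m / (x - y) := by
  rw [basisDivisor, mul_left_comm, coeff_C_mul, coeff_mul_X_sub_C,
    coeff_eq_zero_of_degree_lt hp]
  ring

theorem divDiff_eq_sub_div (f : K → K) {s : Finset ι} {v : ι → K} (hvs : Set.InjOn v s)
    {i j : ι} (hi : i ∈ s) (hj : j ∈ s) (hij : i ≠ j) :
    divDiff f s v = (divDiff f (s.erase j) v - divDiff f (s.erase i) v) / (v i - v j) := by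
  obtain ⟨m, hm⟩ : ∃ m, #s = m + 2 :=
    Nat.exists_eq_add_of_le' (one_lt_card.mpr ⟨i, hi, j, hj, hij⟩)
  have hinj (k : ι) : Set.InjOn v (s.erase k) := hvs.mono (coe_subset.mpr (erase_subset k s))
  have hcard : ∀ k ∈ s, #(s.erase k) - 1 = m := fun k hk => by
    rw [card_erase_of_mem hk, hm]; rfl
  have hdeg : ∀ k ∈ s, (interpolate (s.erase k) v (f ∘ v)).degree < ↑(m + 1) := fun k hk => by
    have := degree_interpolate_lt (f ∘ v) (hinj k)
    rwa [card_erase_of_mem hk, hm] at this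
  -- compare the coefficients of `X ^ (m + 1)` in `interpolate_eq_add_interpolate_erase`
  rw [divDiff_eq_coeff_interpolate f hvs, interpolate_eq_add_interpolate_erase _ hvs hi hj hij,
    show #s - 1 = m + 1 by omega, coeff_add, coeff_mul_basisDivisor (hdeg j hj),
    coeff_mul_basisDivisor (hdeg i hi), divDiff_eq_coeff_interpolate f (hinj _),
    divDiff_eq_coeff_interpolate f (hinj _), hcard i hi, hcard j hj, ← neg_sub (v i), div_neg,
    ← sub_eq_add_neg, sub_div]

theorem divDiff_map [DecidableEq κ] (f : K → K) (s : Finset ι) (e : ι ↪ κ) (v : κ → K) :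
    divDiff f (s.map e) v = divDiff f s (v ∘ e) := by
  simp only [divDiff, sum_map, ← map_erase, prod_map, Function.comp_apply]

theorem divDiff_range_succ (f : K → K) {n : ℕ} {v : ℕ → K} (hv : Set.InjOn v (range (n + 2))) :
    divDiff f (range (n + 2)) v =
      (divDiff f (range (n + 1)) (fun k => v (k + 1)) - divDiff f (range (n + 1)) v) /
        (v (n + 1) - v 0) := by
  rw [divDiff_eq_sub_div f hv (self_mem_range_succ (n + 1)) (by simp) (Nat.succ_ne_zero n),
    range_add_one (n := n + 1), erase_insert (by simp), ← range_add_one, range_add_one' (n + 1),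
    erase_insert (by simp), divDiff_map]
  rfl

theorem sum_div_prod_erase_sub_eq_neg_one_pow_mul_divDiff (f : K → K) (s : Finset ι)
    (v : ι → K) :
    ∑ k ∈ s, f (v k) / ∏ i ∈ s.erase k, (v i - v k) = (-1) ^ (#s - 1) * divDiff f s v := by
  rw [divDiff, mul_sum]
  refine sum_congr rfl fun k hk => ?_
  simp_rw [← neg_sub (v k), prod_neg, card_erase_of_mem hk]
  rw [mul_comm, ← div_div, div_eq_mul_inv _ ((-1) ^ _), ← inv_pow, inv_neg_one, mul_comm]

end DividedDifference

theorem qpoch_self_succ (q : ℂ) (n : ℕ) :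
    qpoch q q (n + 1) = qpoch q q n * (1 - q ^ (n + 1)) := by
  rw [qpoch, prod_range_succ, ← qpoch, pow_succ']

theorem divDiff_mul_pow_eq_iterate_qdiff_div_qpoch (q : ℂ) (F : ℂ → ℂ) (n : ℕ) (x : ℂ)
    (hinj : Set.InjOn (fun k => x * q ^ k) (range (n + 1))) :
    divDiff F (range (n + 1)) (fun k => x * q ^ k) = (qdiff q)^[n] F x / qpoch q q n := by
  induction n generalizing x with
  | zero => simp [divDiff, qpoch]
  | succ n ih =>
    have hnodes : (fun k => x * q ^ (k + 1)) = fun k => q * x * q ^ k := by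
      ext k; ring
    have hshift : Set.InjOn (fun k => q * x * q ^ k) (range (n + 1)) := by
      rw [← hnodes]
      exact hinj.comp (add_left_injective 1).injOn fun k hk => by simpa using hk
    rw [divDiff_range_succ F hinj, hnodes, ih _ hshift, ih _ (hinj.mono (by simp)),
      Function.iterate_succ_apply', qdiff, qpoch_self_succ, div_sub_div_same, div_div, div_div,
      ← neg_sub ((qdiff q)^[n] F x), neg_div, ← div_neg]
    congr 1
    ring

theorem divided_difference_geometric_nodes_general (q x : ℂ) (n : ℕ)
    (hdist : ∀ i ≤ n, ∀ j ≤ n, i ≠ j → x * q ^ i ≠ x * q ^ j) (F : ℂ → ℂ) :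
    (∑ k ∈ Finset.range (n + 1),
        F (x * q ^ k) / ∏ i ∈ (Finset.range (n + 1)).erase k, (x * q ^ i - x * q ^ k)) =
      (-1) ^ n / qpoch q q n * (qdiff q)^[n] F x := by
  have hinj : Set.InjOn (fun k => x * q ^ k) (range (n + 1)) := fun i hi j hj hij =>
    by_contra fun hne => hdist i (mem_range_succ_iff.mp hi) j (mem_range_succ_iff.mp hj) hne hij
  rw [sum_div_prod_erase_sub_eq_neg_one_pow_mul_divDiff F, card_range, Nat.add_sub_cancel,
    divDiff_mul_pow_eq_iterate_qdiff_div_qpoch q F n x hinj]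
  ring

theorem divided_difference_geometric_nodes (q x : ℂ) (n : ℕ) (hn : 1 ≤ n) (hx : x ≠ 0)
    (hpoch : qpoch q q n ≠ 0)
    (hdist : ∀ i ≤ n, ∀ j ≤ n, i ≠ j → x * q ^ i ≠ x * q ^ j) (F : ℂ → ℂ) :
    (∑ k ∈ Finset.range (n + 1),
        F (x * q ^ k) / ∏ i ∈ (Finset.range (n + 1)).erase k, (x * q ^ i - x * q ^ k)) =
      (-1) ^ n / qpoch q q n * (qdiff q)^[n] F x :=
  divided_difference_geometric_nodes_general q x n hdist F
end

section
/- The matrix inversion part of the (f,g)-inversion: if f(x,a)g(b,c) + f(x,b)g(c,a) + f(x,c)g(a,b) = 0 for all a,b,c,x and g is antisymmetric, then the lower triangular matrices B_{n,k} = ∏_{i=k}^{n-1} f(x_i,b_k) / ∏_{i=k+1}^{n} g(b_i,b_k) and C_{n,k} = (f(x_k,b_k)/f(x_n,b_n)) · ∏_{i=k+1}^{n} f(x_i,b_n) / ∏_{i=k}^{n-1} g(b_i,b_n) satisfy Σ_{k ≤ i ≤ n} C_{n,i} B_{i,k} = δ_{n,k} for all n ≥ k ≥ 0. -/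
/-!
Write `C_{n,i} = f(x_i,b_i)/f(x_n,b_n) · A_{n,i}` (`fgC_eq`). After multiplication by `g(b_k,b_n)`, the
three-term relation in the form `f(x,a) g(c,d) = f(x,c) g(a,d) - f(x,d) g(a,c)` turns the summand
`C_{n,i} B_{i,k}` into `E_i - E_{i-1}`, where
`E_i = fgTelescope n k i = f(x_i,b_k) g(b_i,b_n) / f(x_n,b_n) · A_{n,i} B_{i,k}` (and the `i = k` summand is `E_k`).
The row sum therefore collapses to `E_n`, which vanishes because `g(b_n,b_n) = 0`;
on the diagonal the sum is the single term `C_{n,n} B_{n,n} = 1`.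
-/

open Finset

theorem Finset.sum_Icc_eq_of_telescoping {M : Type*} [AddCommGroup M] {u E : ℕ → M} {k n : ℕ}
    (hkn : k ≤ n) (hk : u k = E k) (hstep : ∀ i ∈ Ico k n, u (i + 1) = E (i + 1) - E i) :
    ∑ i ∈ Icc k n, u i = E n := by
  rw [← Ico_add_one_right_eq_Icc, sum_eq_sum_Ico_succ_bot (by omega), ← sum_Ico_add',
    sum_congr rfl hstep, sum_Ico_sub E hkn, hk, add_sub_cancel]

section FGInversion

variable {α β K : Type*} [Field K] (f : α → β → K) (g : β → β → K) (b : ℕ → β) (xs : ℕ → α)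

theorem f_mul_g_eq_sub (hganti : ∀ x y, g x y = - g y x)
    (hfg : ∀ a b c x, f x a * g b c + f x b * g c a + f x c * g a b = 0) (a c d : β) (x : α) :
    f x a * g c d = f x c * g a d - f x d * g a c := by
  linear_combination hfg a c d x - f x c * hganti d a

def fgA (n i : ℕ) : K :=
  (∏ j ∈ Icc (i + 1) n, f (xs j) (b n)) / ∏ j ∈ Ico i n, g (b j) (b n)

def fgB (i k : ℕ) : K :=
  (∏ j ∈ Ico k i, f (xs j) (b k)) / ∏ j ∈ Icc (k + 1) i, g (b j) (b k)

def fgC (n i : ℕ) : K :=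
  f (xs i) (b i) / f (xs n) (b n) * (∏ j ∈ Icc (i + 1) n, f (xs j) (b n)) /
    ∏ j ∈ Ico i n, g (b j) (b n)

def fgTelescope (n k i : ℕ) : K :=
  f (xs i) (b k) * g (b i) (b n) / f (xs n) (b n) * fgA f g b xs n i * fgB f g b xs i k

theorem fgC_eq (n i : ℕ) : fgC f g b xs n i = f (xs i) (b i) / f (xs n) (b n) * fgA f g b xs n i :=
  mul_div_assoc _ _ _

theorem fgA_self (n : ℕ) : fgA f g b xs n n = 1 := by
  simp [fgA]

theorem fgB_self (k : ℕ) : fgB f g b xs k k = 1 := by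
  simp [fgB]

theorem fgC_self {n : ℕ} (hf : f (xs n) (b n) ≠ 0) : fgC f g b xs n n = 1 := by
  rw [fgC_eq, fgA_self, div_self hf, mul_one]

theorem fgA_of_lt {n i : ℕ} (hin : i < n) :
    fgA f g b xs n i = fgA f g b xs n (i + 1) * f (xs (i + 1)) (b n) / g (b i) (b n) := by
  rw [fgA, fgA, Icc_eq_cons_Ioc hin, prod_cons, ← Icc_add_one_left_eq_Ioc,
    prod_eq_prod_Ico_succ_bot hin]
  ring

theorem fgB_succ {i k : ℕ} (hki : k ≤ i) :
    fgB f g b xs (i + 1) k = fgB f g b xs i k * f (xs i) (b k) / g (b (i + 1)) (b k) := by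
  rw [fgB, fgB, prod_Ico_succ_top hki, prod_Icc_succ_top (by omega)]
  ring

theorem fgC_mul_fgB_mul_g_self (n k : ℕ) :
    fgC f g b xs n k * fgB f g b xs k k * g (b k) (b n) = fgTelescope f g b xs n k k := by
  rw [fgC_eq, fgTelescope, fgB_self]
  ring

theorem fgC_mul_fgB_mul_g_succ {n k i : ℕ} (hki : k ≤ i) (hin : i < n)
    (hrel : ∀ a c d x, f x a * g c d = f x c * g a d - f x d * g a c)
    (hgin : g (b i) (b n) ≠ 0) (hgik : g (b (i + 1)) (b k) ≠ 0) :
    fgC f g b xs n (i + 1) * fgB f g b xs (i + 1) k * g (b k) (b n) =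
      fgTelescope f g b xs n k (i + 1) - fgTelescope f g b xs n k i := by
  rw [fgC_eq, fgTelescope, fgTelescope, fgA_of_lt f g b xs hin, fgB_succ f g b xs hki]
  field_simp
  linear_combination fgA f g b xs n (i + 1) * fgB f g b xs i k * f (xs i) (b k) / f (xs n) (b n) *
    hrel (b (i + 1)) (b k) (b n) (xs (i + 1))

theorem sum_fgC_mul_fgB_mul_g {n k : ℕ} (hkn : k ≤ n)
    (hrel : ∀ a c d x, f x a * g c d = f x c * g a d - f x d * g a c)
    (hg : ∀ i j, i ≠ j → g (b i) (b j) ≠ 0) :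
    (∑ i ∈ Icc k n, fgC f g b xs n i * fgB f g b xs i k) * g (b k) (b n) =
      fgTelescope f g b xs n k n := by
  rw [sum_mul]
  refine sum_Icc_eq_of_telescoping hkn (fgC_mul_fgB_mul_g_self f g b xs n k) fun i hi => ?_
  rw [mem_Ico] at hi
  exact fgC_mul_fgB_mul_g_succ f g b xs hi.1 hi.2 hrel (hg i n hi.2.ne) (hg (i + 1) k (by omega))

end FGInversion

theorem fg_matrix_inversion (f g : ℂ → ℂ → ℂ)
    (hganti : ∀ x y, g x y = - g y x)
    (hfg : ∀ a b c x, f x a * g b c + f x b * g c a + f x c * g a b = 0)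
    (b xs : ℕ → ℂ)
    (hg : ∀ i j, i ≠ j → g (b i) (b j) ≠ 0)
    (hf : ∀ n, f (xs n) (b n) ≠ 0)
    (n k : ℕ) (hkn : k ≤ n) :
    (∑ i ∈ Finset.Icc k n,
        (f (xs i) (b i) / f (xs n) (b n) *
            (∏ j ∈ Finset.Icc (i + 1) n, f (xs j) (b n)) /
            ∏ j ∈ Finset.Ico i n, g (b j) (b n)) *
          ((∏ j ∈ Finset.Ico k i, f (xs j) (b k)) /
            ∏ j ∈ Finset.Icc (k + 1) i, g (b j) (b k))) =
      if n = k then 1 else 0 := by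
  change ∑ i ∈ Icc k n, fgC f g b xs n i * fgB f g b xs i k = _
  rcases hkn.eq_or_lt with rfl | hlt
  · rw [Icc_self, sum_singleton, fgC_self f g b xs (hf k), fgB_self, mul_one, if_pos rfl]
  · have hgnn : g (b n) (b n) = 0 := by linear_combination hganti (b n) (b n) / 2
    have hsum := sum_fgC_mul_fgB_mul_g f g b xs hkn (f_mul_g_eq_sub f g hganti hfg) hg
    rw [fgTelescope, hgnn, mul_zero, zero_div, zero_mul, zero_mul] at hsum
    rw [if_neg hlt.ne']
    exact (mul_eq_zero.mp hsum).resolve_right (hg k n hlt.ne)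
end

section
/- For all complex c, q, n ≥ 0 with (c;q)_{n+1} ≠ 0 and (q;q)_n ≠ 0: c^n / (c;q)_{n+1} = (1/(q;q)_n) · Σ_{k=0}^{n} (-1)^k q^{binom(k+1,2) - n k} [n k]_q · 1/(1 - c q^k). Equivalently, D_{q,x}^n {1/(1-cx)} evaluated at x=1 equals c^n (q;q)_n / (c;q)_{n+1}. -/
noncomputable def qbinom (q : ℂ) (n k : ℕ) : ℂ :=
  qpoch q q n / (qpoch q q k * qpoch q q (n - k))

open Finset

lemma qpoch_zero (a q : ℂ) : qpoch a q 0 = 1 := by simp [qpoch]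

lemma qpoch_succ (a q : ℂ) (n : ℕ) : qpoch a q (n+1) = qpoch a q n * (1 - a * q^n) :=
  Finset.prod_range_succ _ _

noncomputable def coef (q : ℂ) (n k : ℕ) : ℂ :=
  (-1) ^ k * q ^ (((k * (k + 1) / 2 : ℕ) : ℤ) - (n : ℤ) * (k : ℤ)) * qbinom q n k

lemma coef_eq (q : ℂ) (hq : q ≠ 0) (n k : ℕ) :
    coef q n k = (-1)^k * q^(k*(k+1)/2) * (q^(n*k))⁻¹ * qbinom q n k := by
  unfold coef
  rw [show ((k*(k+1)/2 : ℕ):ℤ) - (n:ℤ)*(k:ℤ) = ((k*(k+1)/2:ℕ):ℤ) - ((n*k:ℕ):ℤ) by push_cast; ring,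
      zpow_sub₀ hq, zpow_natCast, zpow_natCast, div_eq_mul_inv]
  ring

lemma qbinom_diag (q : ℂ) (n : ℕ) (hn : qpoch q q n ≠ 0) : qbinom q n n = 1 := by
  unfold qbinom
  rw [Nat.sub_self, qpoch_zero, mul_one, div_self hn]

lemma qbinom_zero (q : ℂ) (n : ℕ) (hn : qpoch q q n ≠ 0) : qbinom q n 0 = 1 := by
  unfold qbinom
  rw [Nat.sub_zero, qpoch_zero, one_mul, div_self hn]

lemma tri_succ (k : ℕ) : (k+1)*(k+1+1)/2 = k*(k+1)/2 + (k+1) := by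
  rw [show (k+1)*(k+1+1) = k*(k+1) + (k+1)*2 by ring, Nat.add_mul_div_right _ _ two_pos]

lemma coef_zero (q : ℂ) (n : ℕ) (hp : qpoch q q n ≠ 0) : coef q n 0 = 1 := by
  unfold coef
  rw [qbinom_zero q n hp]
  simp

lemma coef_diag (q : ℂ) (hq : q ≠ 0) (n : ℕ) (hn : qpoch q q n ≠ 0)
    (hn1 : qpoch q q (n+1) ≠ 0) :
    coef q (n+1) (n+1) = -(q^n)⁻¹ * coef q n n := by
  rw [coef_eq q hq, coef_eq q hq, qbinom_diag q n hn, qbinom_diag q (n+1) hn1, tri_succ]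
  generalize n*(n+1)/2 = t
  field_simp
  ring

lemma qbinom_pascal (q : ℂ) (n k : ℕ) (hk : k < n)
    (hp : ∀ j ≤ n+1, qpoch q q j ≠ 0) :
    qbinom q (n+1) (k+1) = q^(k+1) * qbinom q n (k+1) + qbinom q n k := by
  obtain ⟨m, rfl⟩ : ∃ m, n = k+1+m := ⟨n - (k+1), by omega⟩
  unfold qbinom
  have e1 : k+1+m+1 - (k+1) = m+1 := by omega
  have e2 : k+1+m - (k+1) = m := by omega
  have e3 : k+1+m - k = m+1 := by omega
  rw [e1, e2, e3]
  have hP1 : qpoch q q (k+1) = qpoch q q k * (1 - q*q^k) := qpoch_succ _ _ _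
  have hPm : qpoch q q (m+1) = qpoch q q m * (1 - q*q^m) := qpoch_succ _ _ _
  have hPn : qpoch q q (k+1+m+1) = qpoch q q (k+1+m) * (1 - q*q^(k+1+m)) := qpoch_succ _ _ _
  have h1 : qpoch q q k ≠ 0 := hp k (by omega)
  have h2 : qpoch q q (k+1) ≠ 0 := hp (k+1) (by omega)
  have h3 : qpoch q q m ≠ 0 := hp m (by omega)
  have h4 : qpoch q q (m+1) ≠ 0 := hp (m+1) (by omega)
  have f1 : (1 - q*q^k) ≠ 0 := by rw [hP1] at h2; exact right_ne_zero_of_mul h2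
  have f2 : (1 - q*q^m) ≠ 0 := by rw [hPm] at h4; exact right_ne_zero_of_mul h4
  rw [hPn, hP1, hPm]
  field_simp
  ring

lemma coef_pascal (q : ℂ) (hq : q ≠ 0) (n k : ℕ) (hk : k < n)
    (hp : ∀ j ≤ n+1, qpoch q q j ≠ 0) :
    coef q (n+1) (k+1) = coef q n (k+1) - (q^n)⁻¹ * coef q n k := by
  rw [coef_eq q hq, coef_eq q hq, coef_eq q hq, qbinom_pascal q n k hk hp, tri_succ]
  generalize qbinom q n (k+1) = B1
  generalize qbinom q n k = B0
  generalize k*(k+1)/2 = t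
  field_simp
  ring

lemma sum_step (q : ℂ) (hq : q ≠ 0) (n : ℕ) (hp : ∀ j ≤ n+1, qpoch q q j ≠ 0)
    (g : ℕ → ℂ) :
    ∑ k ∈ range (n+2), coef q (n+1) k * g k =
      (∑ k ∈ range (n+1), coef q n k * g k)
        - (q^n)⁻¹ * ∑ k ∈ range (n+1), coef q n k * g (k+1) := by
  rw [Finset.sum_range_succ' (fun k => coef q (n+1) k * g k) (n+1),
      Finset.sum_range_succ (fun k => coef q (n+1) (k+1) * g (k+1)) n,
      Finset.sum_range_succ' (fun k => coef q n k * g k) n,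
      Finset.sum_range_succ (fun k => coef q n k * g (k+1)) n]
  have hmain : ∀ k ∈ range n, coef q (n+1) (k+1) * g (k+1)
      = coef q n (k+1) * g (k+1) - (q^n)⁻¹ * (coef q n k * g (k+1)) := by
    intro k hk
    rw [coef_pascal q hq n k (mem_range.mp hk) hp]
    ring
  rw [Finset.sum_congr rfl hmain, Finset.sum_sub_distrib, ← Finset.mul_sum,
      coef_diag q hq n (hp n (by omega)) (hp (n+1) (by omega)),
      coef_zero q (n+1) (hp (n+1) (by omega)), coef_zero q n (hp n (by omega))]
  ring

lemma part1 (q : ℂ) (hq : q ≠ 0) :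
    ∀ (n : ℕ) (c : ℂ), (∀ k ≤ n, 1 - c*q^k ≠ 0) → (∀ k ≤ n, qpoch q q k ≠ 0) →
      ∑ k ∈ range (n+1), coef q n k * (1/(1 - c*q^k))
        = c^n * qpoch q q n / qpoch c q (n+1)
  | 0, c, hc, hp => by
      have h0 : (1 : ℂ) - c ≠ 0 := by simpa using hc 0 le_rfl
      simp [coef_zero q 0 (hp 0 le_rfl), qpoch_zero, qpoch_succ]
  | (n+1), c, hc, hp => by
      have hc' : ∀ k ≤ n, 1 - c*q^k ≠ 0 := fun k hk => hc k (by omega)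
      have hp' : ∀ k ≤ n, qpoch q q k ≠ 0 := fun k hk => hp k (by omega)
      have hcq : ∀ k ≤ n, 1 - (c*q)*q^k ≠ 0 := by
        intro k hk
        have := hc (k+1) (by omega)
        rw [pow_succ'] at this
        rwa [show (c*q)*q^k = c*(q*q^k) by ring]
      rw [sum_step q hq n hp (fun k => 1/(1 - c*q^k))]
      have hswap : ∀ k ∈ range (n+1),
          coef q n k * (1/(1 - c*q^(k+1))) = coef q n k * (1/(1 - (c*q)*q^k)) := by
        intro k _
        rw [pow_succ']
        ring_nf
      rw [Finset.sum_congr rfl hswap, part1 q hq n c hc' hp', part1 q hq n (c*q) hcq hp']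
      -- structural product identities
      have e1 : qpoch c q (n+1) = (1 - c) * qpoch (c*q) q n := by
        unfold qpoch
        rw [Finset.prod_range_succ' (fun i => 1 - c * q ^ i) n]
        rw [Finset.prod_congr rfl (fun i _ => show 1 - c*q^(i+1) = 1 - (c*q)*q^i by ring)]
        ring
      have e2 : qpoch (c*q) q (n+1) = qpoch (c*q) q n * (1 - (c*q)*q^n) := qpoch_succ _ _ _
      have e3 : qpoch c q (n+2) = (1 - c) * qpoch (c*q) q n * (1 - (c*q)*q^n) := by
        rw [qpoch_succ, e1, show c * q^(n+1) = (c*q)*q^n by ring]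
      rw [e1, e2, e3, qpoch_succ q q n]
      have g0 : (1 : ℂ) - c ≠ 0 := by simpa using hc 0 (by omega)
      have g1 : qpoch (c*q) q n ≠ 0 := by
        unfold qpoch
        exact Finset.prod_ne_zero_iff.mpr (fun i hi => hcq i (by
          have := mem_range.mp hi; omega))
      have g2 : (1 : ℂ) - (c*q)*q^n ≠ 0 := hcq n le_rfl
      field_simp
      ring

lemma part2 (q : ℂ) (hq : q ≠ 0) (c : ℂ) :
    ∀ (n : ℕ) (x : ℂ), x ≠ 0 → (∀ k ≤ n, 1 - c*x*q^k ≠ 0) →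
      (qdiff q)^[n] (fun y => 1/(1 - c*y)) x
        = c^n * qpoch q q n / ∏ i ∈ range (n+1), (1 - c*x*q^i)
  | 0, x, hx, hd => by
      simp [qpoch_zero]
  | (n+1), x, hx, hd => by
      have hd' : ∀ k ≤ n, 1 - c*x*q^k ≠ 0 := fun k hk => hd k (by omega)
      have hdq : ∀ k ≤ n, 1 - c*(q*x)*q^k ≠ 0 := by
        intro k hk
        have := hd (k+1) (by omega)
        rwa [show c*x*q^(k+1) = c*(q*x)*q^k by rw [pow_succ']; ring] at this
      rw [Function.iterate_succ_apply']
      show ((qdiff q)^[n] (fun y => 1/(1 - c*y)) x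
        - (qdiff q)^[n] (fun y => 1/(1 - c*y)) (q*x)) / x = _
      rw [part2 q hq c n x hx hd', part2 q hq c n (q*x) (by exact mul_ne_zero hq hx) hdq]
      have hA : ∏ i ∈ range (n+1), (1 - c*x*q^i)
          = (1 - c*x) * ∏ i ∈ range n, (1 - c*x*q^(i+1)) := by
        rw [Finset.prod_range_succ' (fun i => 1 - c*x*q^i) n]
        rw [pow_zero, mul_one]
        ring
      have hB : ∏ i ∈ range (n+1), (1 - c*(q*x)*q^i)
          = (∏ i ∈ range n, (1 - c*x*q^(i+1))) * (1 - c*x*q^(n+1)) := by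
        rw [Finset.prod_congr rfl (fun i _ => show 1 - c*(q*x)*q^i = 1 - c*x*q^(i+1) by
          rw [pow_succ']; ring)]
        rw [Finset.prod_range_succ (fun i => 1 - c*x*q^(i+1)) n]
      have hD : ∏ i ∈ range (n+2), (1 - c*x*q^i)
          = (1 - c*x) * (∏ i ∈ range n, (1 - c*x*q^(i+1))) * (1 - c*x*q^(n+1)) := by
        rw [Finset.prod_range_succ (fun i => 1 - c*x*q^i) (n+1), hA]
      rw [hA, hB, hD, qpoch_succ q q n]
      have g0 : (1 : ℂ) - c*x ≠ 0 := by simpa using hd 0 (by omega)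
      have g1 : (∏ i ∈ range n, (1 - c*x*q^(i+1))) ≠ 0 :=
        Finset.prod_ne_zero_iff.mpr (fun i hi => hd (i+1) (by
          have := mem_range.mp hi; omega))
      have g2 : (1 : ℂ) - c*x*q^(n+1) ≠ 0 := hd (n+1) le_rfl
      field_simp
      ring

theorem qdiff_geometric_series (q c : ℂ) (hq : q ≠ 0) (n : ℕ)
    (hc : ∀ k ≤ n, 1 - c * q ^ k ≠ 0) (hpoch : ∀ k ≤ n, qpoch q q k ≠ 0) :
    (c ^ n / qpoch c q (n + 1) =
      1 / qpoch q q n * ∑ k ∈ Finset.range (n + 1),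
        (-1) ^ k * q ^ (((k * (k + 1) / 2 : ℕ) : ℤ) - (n : ℤ) * (k : ℤ)) *
          qbinom q n k * (1 / (1 - c * q ^ k))) ∧
    (qdiff q)^[n] (fun y => 1 / (1 - c * y)) 1 =
      c ^ n * qpoch q q n / qpoch c q (n + 1) := by
  have hQ : qpoch c q (n+1) ≠ 0 := by
    unfold qpoch
    exact Finset.prod_ne_zero_iff.mpr (fun i hi => hc i (by
      have := Finset.mem_range.mp hi; omega))
  constructor
  · have h := part1 q hq n c hc hpoch
    unfold coef at h
    rw [h]
    have hP : qpoch q q n ≠ 0 := hpoch n le_rfl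
    field_simp
  · have h := part2 q hq c n 1 one_ne_zero (fun k hk => by rw [mul_one]; exact hc k hk)
    rw [h, show (∏ i ∈ range (n+1), (1 - c*1*q^i)) = qpoch c q (n+1) by
      unfold qpoch; exact Finset.prod_congr rfl (fun i _ => by rw [mul_one])]
end
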